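/- arXiv:1903.09399 — 4 statements merged into one kernel-verified Lean document; each statement's English description precedes it below -/
import Mathlib

section
/- Let 0 < γ < 1, t > 0, and define G_γ(u,t) = (max(1,|a₀|)/(1-γ)) · 1_{(-∞,t+1)}(u) · ((t - u + 2)^{1-γ} − (max(-u,0))^{1-γ}). Then for every α with 1/γ < α ≤ 2 (equivalently γ > 1/α), ∫_{-∞}^{∞} |G_γ(u,t)|^α du < ∞. -/
/-! As `u → -∞`, concavity of `x ↦ x ^ (1 - γ)` gives
`0 ≤ (|u| + t + 2) ^ (1 - γ) - |u| ^ (1 - γ) ≤ (1 - γ) (t + 2) |u| ^ (-γ)`, so the integrand is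
`O(|u| ^ (-γ α))`, which is integrable at `-∞` since `γ α > 1`. On `(-∞, t + 1]` the integrand
is continuous, and it vanishes to the right of `t + 1`. -/

open MeasureTheory

/-- The dominating function `G_γ(u,t)`. -/
noncomputable def Gfun (γ t a₀ : ℝ) : ℝ → ℝ :=
  Set.indicator (Set.Iio (t + 1))
    (fun u => (max 1 |a₀| / (1 - γ)) *
      ((t - u + 2) ^ (1 - γ) - (max (-u) 0) ^ (1 - γ)))

open Filter Asymptotics Set

theorem Real.rpow_add_sub_rpow_le {p v s : ℝ} (hp0 : 0 ≤ p) (hp1 : p ≤ 1) (hv : 0 < v)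
    (hs : 0 ≤ s) : (v + s) ^ p - v ^ p ≤ p * s * v ^ (p - 1) := by
  have hsv : 0 ≤ s / v := div_nonneg hs hv.le
  have hbern : (1 + s / v) ^ p ≤ 1 + p * (s / v) :=
    rpow_one_add_le_one_add_mul_self (by linarith) hp0 hp1
  calc (v + s) ^ p - v ^ p = v ^ p * ((1 + s / v) ^ p - 1) := by
        rw [mul_sub, mul_one, ← Real.mul_rpow hv.le (by positivity), mul_add, mul_one,
          mul_div_cancel₀ _ hv.ne']
    _ ≤ v ^ p * (p * (s / v)) := by gcongr; linarith
    _ = p * s * v ^ (p - 1) := by rw [Real.rpow_sub_one hv.ne']; ring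

theorem isBigO_atBot_rpow_sub_sub_rpow_neg {p s : ℝ} (hp0 : 0 ≤ p) (hp1 : p ≤ 1) (hs : 0 ≤ s) :
    (fun u : ℝ => (s - u) ^ p - (-u) ^ p) =O[atBot] fun u => (-u) ^ (p - 1) := by
  refine IsBigO.of_bound (p * s) ?_
  filter_upwards [eventually_lt_atBot 0] with u hu
  have hv : 0 < -u := neg_pos.mpr hu
  have hmono : (-u) ^ p ≤ (s - u) ^ p := by gcongr; linarith
  rw [Real.norm_of_nonneg (by linarith), Real.norm_of_nonneg (by positivity)]
  simpa [sub_eq_neg_add] using Real.rpow_add_sub_rpow_le hp0 hp1 hv hs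

theorem integrableAtFilter_atBot_neg_rpow {r : ℝ} (hr : r < -1) :
    IntegrableAtFilter (fun u : ℝ => (-u) ^ r) atBot := by
  have h := integrableOn_Ioi_rpow_of_lt hr one_pos
  rw [← neg_neg (1 : ℝ)] at h
  exact ⟨Iio (-1), Iio_mem_atBot _, h.comp_neg_Iio⟩

theorem stmt_4_general (γ t a₀ α : ℝ) (hγ0 : 0 < γ) (hγ1 : γ < 1) (ht : 0 < t)
    (hα1 : 1 / γ < α) :
    Integrable (fun u : ℝ => |Gfun γ t a₀ u| ^ α) := by
  have hp : 0 ≤ 1 - γ := by linarith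
  have hγα : 1 < γ * α := by rwa [div_lt_iff₀' hγ0] at hα1
  have hα0 : 0 < α := by nlinarith
  set C := max 1 |a₀| / (1 - γ)
  set F : ℝ → ℝ := fun u => |C * ((t - u + 2) ^ (1 - γ) - (max (-u) 0) ^ (1 - γ))| ^ α
  have hG : (fun u => |Gfun γ t a₀ u| ^ α) = (Iio (t + 1)).indicator F := by
    ext u
    by_cases hu : u ∈ Iio (t + 1)
    · simp [Gfun, hu, F, C]
    · simp [Gfun, hu, Real.zero_rpow hα0.ne']
  have hF_cont : Continuous F := by fun_prop (disch := exact hα0.le)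
  have hD : (fun u => (t - u + 2) ^ (1 - γ) - (max (-u) 0) ^ (1 - γ)) =O[atBot]
      fun u => (-u) ^ (-γ) := by
    refine (isBigO_atBot_rpow_sub_sub_rpow_neg hp (by linarith) (by linarith : 0 ≤ t + 2)).congr'
      ?_ (by simp)
    filter_upwards [eventually_le_atBot 0] with u hu
    rw [max_eq_left (neg_nonneg.mpr hu), add_sub_right_comm]
  have hF : F =O[atBot] fun u => (-u) ^ (-(γ * α)) := by
    refine ((hD.const_mul_left C).norm_left.rpow hα0.le ?_).congr' (by simp [F]) ?_
    all_goals filter_upwards [eventually_le_atBot 0] with u hu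
    · exact Real.rpow_nonneg (by linarith) _
    · rw [← Real.rpow_mul (by linarith), neg_mul]
  rw [hG, integrable_indicator_iff measurableSet_Iio]
  exact (hF_cont.locallyIntegrable.locallyIntegrableOn _ |>.integrableOn_of_isBigO_atBot hF
    (integrableAtFilter_atBot_neg_rpow (by linarith))).mono_set Iio_subset_Iic_self

theorem stmt_4 (γ t a₀ α : ℝ) (hγ0 : 0 < γ) (hγ1 : γ < 1) (ht : 0 < t)
    (hα1 : 1 / γ < α) (hα2 : α ≤ 2) :
    Integrable (fun u : ℝ => |Gfun γ t a₀ u| ^ α) :=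
  stmt_4_general γ t a₀ α hγ0 hγ1 ht hα1
end

section
/- Let a_k = (1+k)^{-γ₂} with 0 < γ₂ < 1, t,s > 0, u₁ ≥ 0, u₂ ≥ 0 fixed, and let n₁ = n, n₂ = ⌊n^τ⌋ with 0 < τ < 1. Define Z_n = Σ_{k = max(0,-⌊n₁u₁⌋,-⌊n₂u₂⌋)}^{min(⌊n₁t⌋-⌊n₁u₁⌋, ⌊n₂s⌋-⌊n₂u₂⌋)} a_k. Then n₂^{γ₂-1} Z_n → 1_{u₁ < t}·1_{u₂ < s}·(s-u₂)^{1-γ₂}/(1-γ₂) as n → ∞, for almost all (u₁,u₂) in [0,∞)². -/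
open Filter

/-- Coefficients `a_k = (1+k)^{-γ}` for `k ≥ 0`, `0` otherwise. -/
noncomputable def coefF (γ : ℝ) : ℤ → ℝ :=
  fun k => if 0 ≤ k then ((1 : ℝ) + (k : ℝ)) ^ (-γ) else 0

/-!
Comparing `∑_{k<m} (1+k)^{-γ}` with `∫_1^{1+m} x^{-γ} dx` shows that the partial sum equals
`(1+m)^{1-γ}/(1-γ)` up to a bounded error, hence `b^{γ-1} ∑_{k ≤ M} a_k → c^{1-γ}/(1-γ)` whenever
`M/b → c > 0`. For `u₁, u₂ ≥ 0` the sum starts at `0`, and its upper limit is `min A_n B_n` with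
`A_n ≈ (t-u₁) n` and `B_n ≈ (s-u₂) ⌊n^τ⌋ = o(n)`. If `t < u₁` or `s < u₂` the sum is eventually
empty; otherwise `B_n` is eventually the minimum.
-/

open Finset Topology

theorem tendsto_div_of_abs_sub_mul_le {ι : Type*} {l : Filter ι} {f g b : ι → ℝ} {c C : ℝ}
    (hb : Tendsto b l atTop) (hg : Tendsto g l (𝓝 c))
    (hfg : ∀ᶠ i in l, |f i - b i * g i| ≤ C) :
    Tendsto (fun i => f i / b i) l (𝓝 c) := by
  have herr : Tendsto (fun i => (f i - b i * g i) / b i) l (𝓝 0) := by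
    refine squeeze_zero_norm' ?_ ((tendsto_const_nhds (x := C)).div_atTop hb)
    filter_upwards [hfg, hb.eventually_gt_atTop 0] with i hi hbi
    rw [Real.norm_eq_abs, abs_div, abs_of_pos hbi]
    gcongr
  simpa using (hg.add herr).congr' <| by
    filter_upwards [hb.eventually_gt_atTop 0] with i hbi
    field_simp
    ring

theorem abs_sub_floor_mul_sub_floor_mul_le (x v w : ℝ) :
    |((⌊x * v⌋ - ⌊x * w⌋ : ℤ) : ℝ) - x * (v - w)| ≤ 1 := by
  have := Int.floor_le (x * v)
  have := Int.sub_one_lt_floor (x * v)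
  have := Int.floor_le (x * w)
  have := Int.sub_one_lt_floor (x * w)
  rw [abs_le]
  push_cast
  constructor <;> linarith

theorem tendsto_floor_mul_sub_floor_mul_div {ι : Type*} {l : Filter ι} {b : ι → ℝ}
    (hb : Tendsto b l atTop) (v w : ℝ) :
    Tendsto (fun i => ((⌊b i * v⌋ - ⌊b i * w⌋ : ℤ) : ℝ) / b i) l (𝓝 (v - w)) :=
  tendsto_div_of_abs_sub_mul_le hb tendsto_const_nhds
    (.of_forall fun i => abs_sub_floor_mul_sub_floor_mul_le (b i) v w)

theorem sum_range_rpow_neg_mem_Icc {γ : ℝ} (hγ0 : 0 ≤ γ) (hγ1 : γ < 1) (m : ℕ) :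
    ∑ k ∈ range m, (1 + (k : ℝ)) ^ (-γ) ∈
      Set.Icc (((1 + m : ℝ) ^ (1 - γ) - 1) / (1 - γ)) (1 + ((1 + m : ℝ) ^ (1 - γ) - 1) / (1 - γ)) := by
  have hanti : AntitoneOn (fun x : ℝ => x ^ (-γ)) (Set.Icc 1 (1 + m)) := fun x hx y _ hxy =>
    Real.rpow_le_rpow_of_nonpos (one_pos.trans_le hx.1) hxy (neg_nonpos.mpr hγ0)
  have hint : ∫ x in (1 : ℝ)..1 + m, x ^ (-γ) = ((1 + m : ℝ) ^ (1 - γ) - 1) / (1 - γ) := by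
    rw [integral_rpow (Or.inl (by linarith)), Real.one_rpow, neg_add_eq_sub]
  refine ⟨hint ▸ hanti.integral_le_sum, ?_⟩
  calc ∑ k ∈ range m, (1 + (k : ℝ)) ^ (-γ)
      ≤ ∑ k ∈ range (m + 1), (1 + (k : ℝ)) ^ (-γ) :=
        sum_le_sum_of_subset_of_nonneg (range_subset_range.mpr m.le_succ)
          fun k _ _ => by positivity
    _ = 1 + ∑ k ∈ range m, (1 + ((k + 1 : ℕ) : ℝ)) ^ (-γ) := by
        rw [sum_range_succ', add_comm]; simp
    _ ≤ _ := by grw [← hint, hanti.sum_le_integral]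

theorem tendsto_rpow_mul_sum_range_rpow_neg {ι : Type*} {l : Filter ι} {γ c : ℝ}
    (hγ0 : 0 ≤ γ) (hγ1 : γ < 1) {b : ι → ℝ} {m : ι → ℕ} (hb : Tendsto b l atTop)
    (hm : Tendsto (fun i => (1 + m i : ℝ) / b i) l (𝓝 c)) :
    Tendsto (fun i => b i ^ (γ - 1) * ∑ k ∈ range (m i), (1 + (k : ℝ)) ^ (-γ)) l
      (𝓝 (c ^ (1 - γ) / (1 - γ))) := by
  have hγ : 0 < 1 - γ := sub_pos.mpr hγ1
  have hB : Tendsto (fun i => b i ^ (1 - γ)) l atTop := (tendsto_rpow_atTop hγ).comp hb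
  have hg := (hm.rpow_const (Or.inr hγ.le)).div_const (1 - γ)
  refine (tendsto_div_of_abs_sub_mul_le (f := fun i => ∑ k ∈ range (m i), (1 + (k : ℝ)) ^ (-γ))
    hB hg (C := 1 + 1 / (1 - γ)) ?_).congr' ?_
  · filter_upwards [hb.eventually_gt_atTop 0] with i hbi
    obtain ⟨hlo, hhi⟩ := sum_range_rpow_neg_mem_Icc hγ0 hγ1 (m i)
    have hC : 0 ≤ 1 / (1 - γ) := by positivity
    rw [Real.div_rpow (by positivity) hbi.le, mul_div_assoc', mul_div_cancel₀ _ (by positivity),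
      abs_le]
    rw [sub_div] at hlo hhi
    constructor <;> linarith
  · filter_upwards [hb.eventually_gt_atTop 0] with i hbi
    rw [div_eq_mul_inv, mul_comm, ← Real.rpow_neg hbi.le, neg_sub]

theorem sum_Icc_coefF_eq_sum_range (γ : ℝ) (M : ℤ) :
    ∑ k ∈ Icc 0 M, coefF γ k = ∑ k ∈ range (M + 1).toNat, (1 + (k : ℝ)) ^ (-γ) := by
  have hIcc : Icc 0 M = (range (M + 1).toNat).map Nat.castEmbedding := by
    ext k
    simp only [mem_Icc, Finset.mem_map, mem_range, Nat.castEmbedding_apply]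
    constructor
    · rintro ⟨h0, hM⟩
      exact ⟨k.toNat, by omega, by omega⟩
    · rintro ⟨a, ha, rfl⟩
      omega
  rw [hIcc, sum_map]
  refine sum_congr rfl fun k _ => ?_
  simp [coefF]

theorem tendsto_rpow_mul_sum_Icc_coefF {ι : Type*} {l : Filter ι} {γ c : ℝ}
    (hγ0 : 0 ≤ γ) (hγ1 : γ < 1) (hc : 0 < c) {b : ι → ℝ} {M : ι → ℤ} (hb : Tendsto b l atTop)
    (hM : Tendsto (fun i => (M i : ℝ) / b i) l (𝓝 c)) :
    Tendsto (fun i => b i ^ (γ - 1) * ∑ k ∈ Icc 0 (M i), coefF γ k) l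
      (𝓝 (c ^ (1 - γ) / (1 - γ))) := by
  simp only [sum_Icc_coefF_eq_sum_range]
  refine tendsto_rpow_mul_sum_range_rpow_neg hγ0 hγ1 hb <|
    tendsto_div_of_abs_sub_mul_le hb hM (C := 2) ?_
  filter_upwards [hb.eventually_gt_atTop 0, hM.eventually (eventually_gt_nhds hc)]
    with i hbi hMi
  have hM0 : 0 ≤ M i := by exact_mod_cast (div_pos_iff_of_pos_right hbi).mp hMi |>.le
  rw [mul_div_cancel₀ _ hbi.ne', show ((M i + 1).toNat : ℝ) = M i + 1 by
    exact_mod_cast Int.toNat_of_nonneg (by omega), abs_le]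
  constructor <;> linarith

theorem tendsto_floor_rpow_div_natCast {τ : ℝ} (hτ : τ < 1) :
    Tendsto (fun n : ℕ => (⌊(n : ℝ) ^ τ⌋ : ℝ) / n) atTop (𝓝 0) := by
  have hpow : Tendsto (fun n : ℕ => (n : ℝ) ^ (τ - 1)) atTop (𝓝 0) := by
    simpa [neg_sub, Function.comp_def] using
      (tendsto_rpow_neg_atTop (sub_pos.mpr hτ)).comp tendsto_natCast_atTop_atTop
  refine squeeze_zero' (.of_forall fun n => by positivity) ?_ hpow
  filter_upwards [eventually_gt_atTop 0] with n hn
  rw [Real.rpow_sub_one (by positivity)]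
  gcongr
  exact Int.floor_le _

theorem eventually_neg_of_tendsto_div {ι : Type*} {l : Filter ι} {x : ι → ℤ} {d : ι → ℝ}
    {c : ℝ} (hd : ∀ᶠ i in l, 0 < d i) (hx : Tendsto (fun i => (x i : ℝ) / d i) l (𝓝 c))
    (hc : c < 0) : ∀ᶠ i in l, x i < 0 := by
  filter_upwards [hd, hx.eventually (eventually_lt_nhds hc)] with i hdi hxi
  exact_mod_cast neg_of_div_neg_left hxi hdi.le

theorem tendsto_rpow_mul_sum_Icc_min_coefF {γ α β : ℝ} (hγ0 : 0 ≤ γ) (hγ1 : γ < 1)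
    (hα : α ≠ 0) (hβ : β ≠ 0) {b : ℕ → ℝ} {A B : ℕ → ℤ} (hb : Tendsto b atTop atTop)
    (hbn : Tendsto (fun n => b n / n) atTop (𝓝 0))
    (hA : Tendsto (fun n => (A n : ℝ) / n) atTop (𝓝 α))
    (hB : Tendsto (fun n => (B n : ℝ) / b n) atTop (𝓝 β)) :
    Tendsto (fun n => b n ^ (γ - 1) * ∑ k ∈ Icc 0 (min (A n) (B n)), coefF γ k) atTop
      (𝓝 ((if 0 < α then 1 else 0) * (if 0 < β then 1 else 0) * (β ^ (1 - γ) / (1 - γ)))) := by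
  have hn : ∀ᶠ n : ℕ in atTop, (0 : ℝ) < n := tendsto_natCast_atTop_atTop.eventually_gt_atTop 0
  have hzero (hM : ∀ᶠ n in atTop, min (A n) (B n) < 0) :
      Tendsto (fun n => b n ^ (γ - 1) * ∑ k ∈ Icc 0 (min (A n) (B n)), coefF γ k) atTop
        (𝓝 0) :=
    tendsto_const_nhds.congr' <| by
      filter_upwards [hM] with n hn
      simp [Icc_eq_empty_of_lt hn]
  rcases hβ.lt_or_gt with hβ | hβ
  · simpa [not_lt_of_gt hβ] using hzero <| by
      filter_upwards [eventually_neg_of_tendsto_div (hb.eventually_gt_atTop 0) hB hβ]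
        with n hn using min_lt_of_right_lt hn
  rcases hα.lt_or_gt with hα | hα
  · simpa [not_lt_of_gt hα] using hzero <| by
      filter_upwards [eventually_neg_of_tendsto_div hn hA hα]
        with n hn using min_lt_of_left_lt hn
  have hBA : Tendsto (fun n => ((B n - A n : ℤ) : ℝ) / n) atTop (𝓝 (β * 0 - α)) :=
    ((hB.mul hbn).sub hA).congr' <| by
      filter_upwards [hb.eventually_gt_atTop 0] with n hbn
      push_cast
      field_simp
  have hmin : ∀ᶠ n in atTop, min (A n) (B n) = B n := by
    filter_upwards [eventually_neg_of_tendsto_div hn hBA (by linarith)] with n hn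
    exact min_eq_right (by omega)
  simpa [hα, hβ] using (tendsto_rpow_mul_sum_Icc_coefF hγ0 hγ1 hβ hb hB).congr' <| by
    filter_upwards [hmin] with n hn
    rw [hn]

theorem stmt_15_general (γ₂ t s u₁ u₂ τ : ℝ) (hγ0 : 0 < γ₂) (hγ1 : γ₂ < 1)
    (hu₁ : 0 ≤ u₁) (hu₂ : 0 ≤ u₂)
    (hτ0 : 0 < τ) (hτ1 : τ < 1) (hu₁t : u₁ ≠ t) (hu₂s : u₂ ≠ s) :
    Tendsto
      (fun n : ℕ =>
        ((⌊(n : ℝ) ^ τ⌋ : ℝ)) ^ (γ₂ - 1) *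
          ∑ k ∈ Finset.Icc
              (max (max (0 : ℤ) (-⌊(n : ℝ) * u₁⌋)) (-⌊(⌊(n : ℝ) ^ τ⌋ : ℝ) * u₂⌋))
              (min (⌊(n : ℝ) * t⌋ - ⌊(n : ℝ) * u₁⌋)
                (⌊(⌊(n : ℝ) ^ τ⌋ : ℝ) * s⌋ - ⌊(⌊(n : ℝ) ^ τ⌋ : ℝ) * u₂⌋)),
            coefF γ₂ k)
      atTop
      (nhds
        ((if u₁ < t then (1 : ℝ) else 0) * (if u₂ < s then (1 : ℝ) else 0) *
          ((s - u₂) ^ (1 - γ₂) / (1 - γ₂)))) := by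
  have hlow (n : ℕ) :
      max (max (0 : ℤ) (-⌊(n : ℝ) * u₁⌋)) (-⌊(⌊(n : ℝ) ^ τ⌋ : ℝ) * u₂⌋) = 0 := by
    have h₁ : 0 ≤ ⌊(n : ℝ) * u₁⌋ := Int.floor_nonneg.mpr (by positivity)
    have h₂ : 0 ≤ ⌊(⌊(n : ℝ) ^ τ⌋ : ℝ) * u₂⌋ :=
      Int.floor_nonneg.mpr (mul_nonneg (by positivity) hu₂)
    omega
  have hb : Tendsto (fun n : ℕ => (⌊(n : ℝ) ^ τ⌋ : ℝ)) atTop atTop :=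
    tendsto_intCast_atTop_atTop.comp <|
      tendsto_floor_atTop.comp <| (tendsto_rpow_atTop hτ0).comp tendsto_natCast_atTop_atTop
  simp only [hlow]
  simpa only [sub_pos] using tendsto_rpow_mul_sum_Icc_min_coefF hγ0.le hγ1
    (sub_ne_zero.mpr hu₁t.symm) (sub_ne_zero.mpr hu₂s.symm) hb
    (tendsto_floor_rpow_div_natCast hτ1)
    (tendsto_floor_mul_sub_floor_mul_div tendsto_natCast_atTop_atTop t u₁)
    (tendsto_floor_mul_sub_floor_mul_div hb s u₂)

theorem stmt_15 (γ₂ t s u₁ u₂ τ : ℝ) (hγ0 : 0 < γ₂) (hγ1 : γ₂ < 1)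
    (ht : 0 < t) (hs : 0 < s) (hu₁ : 0 ≤ u₁) (hu₂ : 0 ≤ u₂)
    (hτ0 : 0 < τ) (hτ1 : τ < 1) (hu₁t : u₁ ≠ t) (hu₂s : u₂ ≠ s) :
    Tendsto
      (fun n : ℕ =>
        ((⌊(n : ℝ) ^ τ⌋ : ℝ)) ^ (γ₂ - 1) *
          ∑ k ∈ Finset.Icc
              (max (max (0 : ℤ) (-⌊(n : ℝ) * u₁⌋)) (-⌊(⌊(n : ℝ) ^ τ⌋ : ℝ) * u₂⌋))
              (min (⌊(n : ℝ) * t⌋ - ⌊(n : ℝ) * u₁⌋)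
                (⌊(⌊(n : ℝ) ^ τ⌋ : ℝ) * s⌋ - ⌊(⌊(n : ℝ) ^ τ⌋ : ℝ) * u₂⌋)),
            coefF γ₂ k)
      atTop
      (nhds
        ((if u₁ < t then (1 : ℝ) else 0) * (if u₂ < s then (1 : ℝ) else 0) *
          ((s - u₂) ^ (1 - γ₂) / (1 - γ₂)))) :=
  stmt_15_general γ₂ t s u₁ u₂ τ hγ0 hγ1 hu₁ hu₂ hτ0 hτ1 hu₁t hu₂s
end

section
/- Let (a_j(i))_{i≥1}, j = 1,2,3, be absolutely summable sequences with sums A_j = Σ_{i≥1} a_j(i) and B_j = Σ_{i≥1} a_j(i)², and define the filter on ℤ₊³ supported on the three coordinate half-axes with c_{(0,0,0)} = −(A₁+A₂+A₃). With ρ(n₁,n₂,n₃) = Σ_{𝐢∈ℤ₊³} c_𝐢 c_{𝐢+(n₁,n₂,n₃)} (terms with any negative index treated as zero), one has V₁ := Σ_{n₁∈ℤ} ρ(n₁,0,0) = (A₂+A₃)² + B₂ + B₃ > 0 (assuming not all a₂, a₃ vanish). -/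
/-- The three-axis filter on `ℤ₊³`: `c_{(i,0,0)} = a₁(i)`, `c_{(0,i,0)} = a₂(i)`,
`c_{(0,0,i)} = a₃(i)` for `i ≥ 1`, `c_{(0,0,0)} = -(A₁+A₂+A₃)`, and `0` otherwise. -/
noncomputable def axisFilter3 (a₁ a₂ a₃ : ℕ → ℝ) : ℤ × ℤ × ℤ → ℝ := fun p =>
  if p.1 = 0 ∧ p.2.1 = 0 ∧ p.2.2 = 0 then
    -((∑' i : ℕ, a₁ i) + (∑' i : ℕ, a₂ i) + (∑' i : ℕ, a₃ i))
  else if 1 ≤ p.1 ∧ p.2.1 = 0 ∧ p.2.2 = 0 then a₁ p.1.toNat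
  else if p.1 = 0 ∧ 1 ≤ p.2.1 ∧ p.2.2 = 0 then a₂ p.2.1.toNat
  else if p.1 = 0 ∧ p.2.1 = 0 ∧ 1 ≤ p.2.2 then a₃ p.2.2.toNat
  else 0

/-- The covariance function `ρ(n₁,n₂,n₃) = ∑_{𝐢} c_𝐢 c_{𝐢+𝐧}` of the associated linear
random field. -/
noncomputable def rho3 (a₁ a₂ a₃ : ℕ → ℝ) (n : ℤ × ℤ × ℤ) : ℝ :=
  ∑' p : ℤ × ℤ × ℤ,
    axisFilter3 a₁ a₂ a₃ p *
      axisFilter3 a₁ a₂ a₃ (p.1 + n.1, p.2.1 + n.2.1, p.2.2 + n.2.2)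

/-! Translating by `(n, 0, 0)` moves only the first axis of the filter into itself; the other two
axes meet their translates only for `n = 0`. So `ρ(n,0,0)` is the autocorrelation of the
one-dimensional filter `d = c(·,0,0)` plus `δ_{n0} (B₂ + B₃)`, and summing an autocorrelation over
all lags gives `(∑ d)² = (c₀ + A₁)² = (A₂ + A₃)²`. -/

theorem Summable.sq {ι : Type*} {a : ι → ℝ} (ha : Summable a) : Summable fun i => a i ^ 2 := by
  have habs := summable_abs_iff.mpr ha
  refine (habs.mul_left (∑' j, |a j|)).of_nonneg_of_le (fun i => sq_nonneg _) fun i => ?_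
  rw [← sq_abs, _root_.sq]
  exact mul_le_mul_of_nonneg_right (habs.le_tsum i fun j _ => abs_nonneg _) (abs_nonneg _)

section Autocorrelation

variable {G R : Type*} [AddGroup G] [NormedRing R] [CompleteSpace R] {f g : G → R}

theorem summable_mul_comp_add (hf : Summable (‖f ·‖)) (hg : Summable (‖g ·‖)) :
    Summable fun q : G × G => f q.1 * g (q.1 + q.2) :=
  (Equiv.prodShear (Equiv.refl G) Equiv.addLeft).summable_iff.mpr
    (summable_mul_of_summable_norm hf hg)

theorem hasSum_tsum_mul_comp_add (hf : Summable (‖f ·‖)) (hg : Summable (‖g ·‖)) :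
    HasSum (fun n => ∑' k, f k * g (k + n)) ((∑' k, f k) * ∑' k, g k) := by
  have hsum := summable_mul_comp_add hf hg
  have htot : HasSum (fun q : G × G => f q.1 * g (q.1 + q.2)) ((∑' k, f k) * ∑' k, g k) := by
    rw [tsum_mul_tsum_of_summable_norm hf hg,
      ← (Equiv.prodShear (Equiv.refl G) Equiv.addLeft).tsum_eq]
    exact hsum.hasSum
  exact ((Equiv.prodComm G G).hasSum_iff.mpr htot).prod_fiberwise fun n =>
    (hsum.prod_symm.prod_factor n).hasSum

end Autocorrelation

section CoordinateAxes

variable {M : Type*} [AddCommMonoid M] [TopologicalSpace M] {s : M}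

theorem hasSum_ite_firstAxis {h : ℤ → M} (hh : HasSum h s) :
    HasSum (fun p : ℤ × ℤ × ℤ => if p.2.1 = 0 ∧ p.2.2 = 0 then h p.1 else 0) s := by
  have hinj : Function.Injective fun k : ℤ => ((k, 0, 0) : ℤ × ℤ × ℤ) :=
    fun k l hkl => by simpa using hkl
  refine (hinj.hasSum_iff ?_).mp (by simpa [Function.comp_def] using hh)
  rintro ⟨x, y, z⟩ hp
  rw [if_neg]
  rintro ⟨rfl, rfl⟩
  exact hp ⟨x, rfl⟩

theorem hasSum_ite_secondAxis {b : ℕ → M} (hb : HasSum b s) :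
    HasSum (fun p : ℤ × ℤ × ℤ => if p.1 = 0 ∧ p.2.2 = 0 ∧ 0 ≤ p.2.1 then b p.2.1.toNat else 0)
      s := by
  have hinj : Function.Injective fun i : ℕ => ((0, (i : ℤ), 0) : ℤ × ℤ × ℤ) :=
    fun i j hij => by simpa using hij
  refine (hinj.hasSum_iff ?_).mp (by simpa [Function.comp_def] using hb)
  rintro ⟨x, y, z⟩ hp
  rw [if_neg]
  rintro ⟨rfl, rfl, hy⟩
  exact hp ⟨y.toNat, by simp [hy]⟩

theorem hasSum_ite_thirdAxis {b : ℕ → M} (hb : HasSum b s) :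
    HasSum (fun p : ℤ × ℤ × ℤ => if p.1 = 0 ∧ p.2.1 = 0 ∧ 0 ≤ p.2.2 then b p.2.2.toNat else 0)
      s := by
  rw [← (Equiv.prodCongr (Equiv.refl ℤ) (Equiv.prodComm ℤ ℤ)).hasSum_iff]
  simpa [Function.comp_def, and_comm] using hasSum_ite_secondAxis hb

end CoordinateAxes

section AxisFilter

variable (a₁ a₂ a₃ : ℕ → ℝ)

noncomputable def firstAxisFilter (k : ℤ) : ℝ := axisFilter3 a₁ a₂ a₃ (k, 0, 0)

variable {a₁ a₂ a₃}

theorem firstAxisFilter_natCast (h10 : a₁ 0 = 0) (m : ℕ) :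
    firstAxisFilter a₁ a₂ a₃ m =
      a₁ m + if m = 0 then -((∑' i, a₁ i) + (∑' i, a₂ i) + (∑' i, a₃ i)) else 0 := by
  rcases m with _ | m
  · simp [firstAxisFilter, axisFilter3, h10]
  · simp only [firstAxisFilter, axisFilter3, and_true]
    split_ifs <;> first | (exfalso; omega) | simp

theorem firstAxisFilter_neg_succ (m : ℕ) : firstAxisFilter a₁ a₂ a₃ (-(m + 1)) = 0 := by
  simp only [firstAxisFilter, axisFilter3]
  split_ifs <;> first | rfl | omega

theorem hasSum_firstAxisFilter (h10 : a₁ 0 = 0) (h1 : Summable a₁) :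
    HasSum (firstAxisFilter a₁ a₂ a₃) (-((∑' i, a₂ i) + (∑' i, a₃ i))) := by
  have hnat := h1.hasSum.add (hasSum_ite_eq 0 (-((∑' i, a₁ i) + (∑' i, a₂ i) + (∑' i, a₃ i))))
  rw [← funext (firstAxisFilter_natCast h10)] at hnat
  convert hnat.of_nat_of_neg_add_one
    (hasSum_zero.congr_fun fun m => firstAxisFilter_neg_succ m) using 1
  ring

-- The last two pieces also charge the origin, where `h20`, `h30` make them vanish; this lets them
-- sum to the full `∑ a₂ i ^ 2` and `∑ a₃ i ^ 2`.
theorem axisFilter3_mul_shift (h20 : a₂ 0 = 0) (h30 : a₃ 0 = 0) (n x y z : ℤ) :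
    axisFilter3 a₁ a₂ a₃ (x, y, z) * axisFilter3 a₁ a₂ a₃ (x + n, y, z) =
      (if y = 0 ∧ z = 0 then firstAxisFilter a₁ a₂ a₃ x * firstAxisFilter a₁ a₂ a₃ (x + n)
        else 0) +
        if n = 0 then
          (if x = 0 ∧ z = 0 ∧ 0 ≤ y then a₂ y.toNat ^ 2 else 0) +
            if x = 0 ∧ y = 0 ∧ 0 ≤ z then a₃ z.toNat ^ 2 else 0
        else 0 := by
  by_cases hyz : y = 0 ∧ z = 0
  · obtain ⟨rfl, rfl⟩ := hyz
    simp [firstAxisFilter, h20, h30]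
  · simp only [axisFilter3, if_neg hyz]
    split_ifs <;> first | (exfalso; omega) | ring1

theorem rho3_firstAxis (h20 : a₂ 0 = 0) (h30 : a₃ 0 = 0) (hs2 : Summable fun i => a₂ i ^ 2)
    (hs3 : Summable fun i => a₃ i ^ 2) (n : ℤ)
    (hrow : Summable fun k => firstAxisFilter a₁ a₂ a₃ k * firstAxisFilter a₁ a₂ a₃ (k + n)) :
    rho3 a₁ a₂ a₃ (n, 0, 0) =
      (∑' k, firstAxisFilter a₁ a₂ a₃ k * firstAxisFilter a₁ a₂ a₃ (k + n)) +
        if n = 0 then (∑' i, a₂ i ^ 2) + ∑' i, a₃ i ^ 2 else 0 := by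
  have hsq : HasSum (fun p : ℤ × ℤ × ℤ => if n = 0 then
      (if p.1 = 0 ∧ p.2.2 = 0 ∧ 0 ≤ p.2.1 then a₂ p.2.1.toNat ^ 2 else 0) +
        if p.1 = 0 ∧ p.2.1 = 0 ∧ 0 ≤ p.2.2 then a₃ p.2.2.toNat ^ 2 else 0 else 0)
      (if n = 0 then (∑' i, a₂ i ^ 2) + ∑' i, a₃ i ^ 2 else 0) := by
    by_cases hn : n = 0
    · simpa only [if_pos hn] using
        (hasSum_ite_secondAxis hs2.hasSum).add (hasSum_ite_thirdAxis hs3.hasSum)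
    · simpa only [if_neg hn] using hasSum_zero
  rw [← ((hasSum_ite_firstAxis hrow.hasSum).add hsq).tsum_eq, rho3]
  refine tsum_congr fun ⟨x, y, z⟩ => ?_
  simp only [add_zero]
  exact axisFilter3_mul_shift h20 h30 n x y z

end AxisFilter

theorem stmt_16 (a₁ a₂ a₃ : ℕ → ℝ)
    (h10 : a₁ 0 = 0) (h20 : a₂ 0 = 0) (h30 : a₃ 0 = 0)
    (h1 : Summable fun i => |a₁ i|) (h2 : Summable fun i => |a₂ i|)
    (h3 : Summable fun i => |a₃ i|)
    (hnz : ∃ i, a₂ i ≠ 0 ∨ a₃ i ≠ 0) :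
    (∑' n : ℤ, rho3 a₁ a₂ a₃ (n, 0, 0)) =
        ((∑' i : ℕ, a₂ i) + (∑' i : ℕ, a₃ i)) ^ 2 +
          (∑' i : ℕ, (a₂ i) ^ 2) + (∑' i : ℕ, (a₃ i) ^ 2) ∧
      0 < ∑' n : ℤ, rho3 a₁ a₂ a₃ (n, 0, 0) := by
  have hs2 := h2.of_abs.sq
  have hs3 := h3.of_abs.sq
  have hD := hasSum_firstAxisFilter (a₂ := a₂) (a₃ := a₃) h10 h1.of_abs
  have hd : Summable (‖firstAxisFilter a₁ a₂ a₃ ·‖) := summable_abs_iff.mpr hD.summable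
  have hrho : HasSum (fun n : ℤ => rho3 a₁ a₂ a₃ (n, 0, 0))
      ((-((∑' i, a₂ i) + ∑' i, a₃ i)) * -((∑' i, a₂ i) + ∑' i, a₃ i) +
        ((∑' i, a₂ i ^ 2) + ∑' i, a₃ i ^ 2)) := by
    rw [← hD.tsum_eq]
    refine ((hasSum_tsum_mul_comp_add hd hd).add (hasSum_ite_eq 0 _)).congr_fun fun n => ?_
    exact rho3_firstAxis h20 h30 hs2 hs3 n ((summable_mul_comp_add hd hd).prod_symm.prod_factor n)
  have hB : 0 < (∑' i, a₂ i ^ 2) + ∑' i, a₃ i ^ 2 := by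
    obtain ⟨i, hi | hi⟩ := hnz
    · exact add_pos_of_pos_of_nonneg (hs2.tsum_pos (fun _ => sq_nonneg _) i (by positivity))
        (tsum_nonneg fun _ => sq_nonneg _)
    · exact add_pos_of_nonneg_of_pos (tsum_nonneg fun _ => sq_nonneg _)
        (hs3.tsum_pos (fun _ => sq_nonneg _) i (by positivity))
  rw [hrho.tsum_eq]
  constructor
  · ring
  · exact add_pos_of_nonneg_of_pos (mul_self_nonneg _) hB
end

section
/- With the same three-axis filter on ℤ₊³ summing to zero (c₀ = −(A₁+A₂+A₃)), the sum of covariances over the horizontal coordinate plane satisfies U₃ := Σ_{(n₁,n₂)∈ℤ²} ρ(n₁,n₂,0) = A₃² + B₃ > 0, and the total sum Σ_{(n₁,n₂,n₃)∈ℤ³} ρ(n₁,n₂,n₃) = 0. -/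
set_option maxHeartbeats 4000000


/-- The three-axis filter on `ℤ₊³`: `c_{(i,0,0)} = a₁(i)`, `c_{(0,i,0)} = a₂(i)`,
`c_{(0,0,i)} = a₃(i)` for `i ≥ 1`, `c_{(0,0,0)} = -(A₁+A₂+A₃)`, and `0` otherwise. -/
noncomputable def axisFilter3' (a₁ a₂ a₃ : ℕ → ℝ) : ℤ × ℤ × ℤ → ℝ := fun p =>
  if p.1 = 0 ∧ p.2.1 = 0 ∧ p.2.2 = 0 then
    -((∑' i : ℕ, a₁ i) + (∑' i : ℕ, a₂ i) + (∑' i : ℕ, a₃ i))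
  else if 1 ≤ p.1 ∧ p.2.1 = 0 ∧ p.2.2 = 0 then a₁ p.1.toNat
  else if p.1 = 0 ∧ 1 ≤ p.2.1 ∧ p.2.2 = 0 then a₂ p.2.1.toNat
  else if p.1 = 0 ∧ p.2.1 = 0 ∧ 1 ≤ p.2.2 then a₃ p.2.2.toNat
  else 0

/-- The covariance function of the associated linear random field. -/
noncomputable def rho3' (a₁ a₂ a₃ : ℕ → ℝ) (n : ℤ × ℤ × ℤ) : ℝ :=
  ∑' p : ℤ × ℤ × ℤ,
    axisFilter3' a₁ a₂ a₃ p *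
      axisFilter3' a₁ a₂ a₃ (p.1 + n.1, p.2.1 + n.2.1, p.2.2 + n.2.2)

/-- sum of the `k`-th horizontal plane slice of the filter -/
noncomputable def planeSum3' (a₁ a₂ a₃ : ℕ → ℝ) : ℤ → ℝ := fun k =>
  if k = 0 then
    -((∑' i : ℕ, a₁ i) + (∑' i : ℕ, a₂ i) + (∑' i : ℕ, a₃ i))
      + (∑' i : ℕ, a₁ i) + (∑' i : ℕ, a₂ i)
  else if 1 ≤ k then a₃ k.toNat else 0

lemma hasSum_of_inj {α β : Type*} (g : α → ℝ) (hg : Summable g) (e : α → β)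
    (he : Function.Injective e) (h : β → ℝ) (h1 : ∀ n, h (e n) = g n)
    (h2 : ∀ p, p ∉ Set.range e → h p = 0) :
    HasSum h (∑' n, g n) := by
  rw [← he.hasSum_iff h2]
  exact hg.hasSum.congr_fun h1

lemma summable_mul_bound {ι : Type*} {a : ι → ℝ} (ha : Summable fun i => |a i|)
    {φ : ι → ℝ} {C : ℝ} (hφ : ∀ i, |φ i| ≤ C) : Summable fun i => a i * φ i := by
  apply Summable.of_abs
  refine Summable.of_nonneg_of_le (fun i => abs_nonneg _) (fun i => ?_) (ha.mul_right C)
  rw [abs_mul]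
  exact mul_le_mul_of_nonneg_left (hφ i) (abs_nonneg _)

lemma key3' (a₁ a₂ a₃ : ℕ → ℝ)
    (h10 : a₁ 0 = 0) (h20 : a₂ 0 = 0) (h30 : a₃ 0 = 0)
    (h1 : Summable fun i => |a₁ i|) (h2 : Summable fun i => |a₂ i|)
    (h3 : Summable fun i => |a₃ i|)
    (F : ℤ × ℤ × ℤ → ℝ) (C : ℝ) (hF : ∀ p, |F p| ≤ C) :
    HasSum (fun p => axisFilter3' a₁ a₂ a₃ p * F p)
      (-((∑' i : ℕ, a₁ i) + (∑' i : ℕ, a₂ i) + (∑' i : ℕ, a₃ i)) * F (0, 0, 0)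
        + (∑' i : ℕ, a₁ i * F ((i : ℤ), 0, 0))
        + (∑' i : ℕ, a₂ i * F (0, (i : ℤ), 0))
        + (∑' i : ℕ, a₃ i * F (0, 0, (i : ℤ)))) := by
  have H0 : HasSum (fun p : ℤ × ℤ × ℤ => if p = ((0 : ℤ), (0 : ℤ), (0 : ℤ)) then
      -((∑' i : ℕ, a₁ i) + (∑' i : ℕ, a₂ i) + (∑' i : ℕ, a₃ i)) * F (0, 0, 0) else 0)
      (-((∑' i : ℕ, a₁ i) + (∑' i : ℕ, a₂ i) + (∑' i : ℕ, a₃ i)) * F (0, 0, 0)) :=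
    hasSum_ite_eq _ _
  have H1 : HasSum (fun p : ℤ × ℤ × ℤ =>
      if 1 ≤ p.1 ∧ p.2.1 = 0 ∧ p.2.2 = 0 then a₁ p.1.toNat * F p else 0)
      (∑' i : ℕ, a₁ i * F ((i : ℤ), 0, 0)) := by
    refine hasSum_of_inj _ (summable_mul_bound h1 fun i => hF _)
      (fun n : ℕ => (((n : ℤ), 0, 0) : ℤ × ℤ × ℤ)) (fun m n h => by simpa using h) _ ?_ ?_
    · intro n
      rcases Nat.eq_zero_or_pos n with rfl | hn
      · simp [h10]
      · rw [if_pos ⟨(by exact_mod_cast hn : (1:ℤ) ≤ (n:ℤ)), rfl, rfl⟩]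
        simp
    · rintro ⟨x, y, z⟩ hp
      rw [if_neg]
      rintro ⟨hx, rfl, rfl⟩
      exact hp ⟨x.toNat, by have hx' : (1:ℤ) ≤ x := hx; simp [Int.toNat_of_nonneg (show (0:ℤ) ≤ x by omega)]⟩
  have H2 : HasSum (fun p : ℤ × ℤ × ℤ =>
      if p.1 = 0 ∧ 1 ≤ p.2.1 ∧ p.2.2 = 0 then a₂ p.2.1.toNat * F p else 0)
      (∑' i : ℕ, a₂ i * F (0, (i : ℤ), 0)) := by
    refine hasSum_of_inj _ (summable_mul_bound h2 fun i => hF _)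
      (fun n : ℕ => ((0, (n : ℤ), 0) : ℤ × ℤ × ℤ)) (fun m n h => by simpa using h) _ ?_ ?_
    · intro n
      rcases Nat.eq_zero_or_pos n with rfl | hn
      · simp [h20]
      · rw [if_pos ⟨rfl, (by exact_mod_cast hn : (1:ℤ) ≤ (n:ℤ)), rfl⟩]
        simp
    · rintro ⟨x, y, z⟩ hp
      rw [if_neg]
      rintro ⟨rfl, hy, rfl⟩
      exact hp ⟨y.toNat, by have hy' : (1:ℤ) ≤ y := hy; simp [Int.toNat_of_nonneg (show (0:ℤ) ≤ y by omega)]⟩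
  have H3 : HasSum (fun p : ℤ × ℤ × ℤ =>
      if p.1 = 0 ∧ p.2.1 = 0 ∧ 1 ≤ p.2.2 then a₃ p.2.2.toNat * F p else 0)
      (∑' i : ℕ, a₃ i * F (0, 0, (i : ℤ))) := by
    refine hasSum_of_inj _ (summable_mul_bound h3 fun i => hF _)
      (fun n : ℕ => ((0, 0, (n : ℤ)) : ℤ × ℤ × ℤ)) (fun m n h => by simpa using h) _ ?_ ?_
    · intro n
      rcases Nat.eq_zero_or_pos n with rfl | hn
      · simp [h30]
      · rw [if_pos ⟨rfl, rfl, (by exact_mod_cast hn : (1:ℤ) ≤ (n:ℤ))⟩]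
        simp
    · rintro ⟨x, y, z⟩ hp
      rw [if_neg]
      rintro ⟨rfl, rfl, hz⟩
      exact hp ⟨z.toNat, by have hz' : (1:ℤ) ≤ z := hz; simp [Int.toNat_of_nonneg (show (0:ℤ) ≤ z by omega)]⟩
  refine (((H0.add H1).add H2).add H3).congr_fun fun p => ?_
  rcases p with ⟨x, y, z⟩
  by_cases h0 : x = 0 ∧ y = 0 ∧ z = 0
  · obtain ⟨rfl, rfl, rfl⟩ := h0
    simp [axisFilter3']
  · have hδ : ¬(((x, y, z) : ℤ × ℤ × ℤ) = ((0 : ℤ), (0 : ℤ), (0 : ℤ))) := by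
      simpa [Prod.mk.injEq] using h0
    simp only [axisFilter3']
    rw [if_neg h0, if_neg hδ]
    split_ifs <;> first | ring1 | (exfalso; omega)

lemma keyAbs3' (a₁ a₂ a₃ : ℕ → ℝ)
    (h10 : a₁ 0 = 0) (h20 : a₂ 0 = 0) (h30 : a₃ 0 = 0)
    (h1 : Summable fun i => |a₁ i|) (h2 : Summable fun i => |a₂ i|)
    (h3 : Summable fun i => |a₃ i|) :
    Summable (fun p => |axisFilter3' a₁ a₂ a₃ p|) := by
  have H0 : HasSum (fun p : ℤ × ℤ × ℤ => if p = ((0 : ℤ), (0 : ℤ), (0 : ℤ)) then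
      |-((∑' i : ℕ, a₁ i) + (∑' i : ℕ, a₂ i) + (∑' i : ℕ, a₃ i))| else 0)
      |-((∑' i : ℕ, a₁ i) + (∑' i : ℕ, a₂ i) + (∑' i : ℕ, a₃ i))| :=
    hasSum_ite_eq _ _
  have H1 : HasSum (fun p : ℤ × ℤ × ℤ =>
      if 1 ≤ p.1 ∧ p.2.1 = 0 ∧ p.2.2 = 0 then |a₁ p.1.toNat| else 0)
      (∑' i : ℕ, |a₁ i|) := by
    refine hasSum_of_inj _ h1
      (fun n : ℕ => (((n : ℤ), 0, 0) : ℤ × ℤ × ℤ)) (fun m n h => by simpa using h) _ ?_ ?_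
    · intro n
      rcases Nat.eq_zero_or_pos n with rfl | hn
      · simp [h10]
      · rw [if_pos ⟨(by exact_mod_cast hn : (1:ℤ) ≤ (n:ℤ)), rfl, rfl⟩]
        simp
    · rintro ⟨x, y, z⟩ hp
      rw [if_neg]
      rintro ⟨hx, rfl, rfl⟩
      exact hp ⟨x.toNat, by have hx' : (1:ℤ) ≤ x := hx; simp [Int.toNat_of_nonneg (show (0:ℤ) ≤ x by omega)]⟩
  have H2 : HasSum (fun p : ℤ × ℤ × ℤ =>
      if p.1 = 0 ∧ 1 ≤ p.2.1 ∧ p.2.2 = 0 then |a₂ p.2.1.toNat| else 0)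
      (∑' i : ℕ, |a₂ i|) := by
    refine hasSum_of_inj _ h2
      (fun n : ℕ => ((0, (n : ℤ), 0) : ℤ × ℤ × ℤ)) (fun m n h => by simpa using h) _ ?_ ?_
    · intro n
      rcases Nat.eq_zero_or_pos n with rfl | hn
      · simp [h20]
      · rw [if_pos ⟨rfl, (by exact_mod_cast hn : (1:ℤ) ≤ (n:ℤ)), rfl⟩]
        simp
    · rintro ⟨x, y, z⟩ hp
      rw [if_neg]
      rintro ⟨rfl, hy, rfl⟩
      exact hp ⟨y.toNat, by have hy' : (1:ℤ) ≤ y := hy; simp [Int.toNat_of_nonneg (show (0:ℤ) ≤ y by omega)]⟩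
  have H3 : HasSum (fun p : ℤ × ℤ × ℤ =>
      if p.1 = 0 ∧ p.2.1 = 0 ∧ 1 ≤ p.2.2 then |a₃ p.2.2.toNat| else 0)
      (∑' i : ℕ, |a₃ i|) := by
    refine hasSum_of_inj _ h3
      (fun n : ℕ => ((0, 0, (n : ℤ)) : ℤ × ℤ × ℤ)) (fun m n h => by simpa using h) _ ?_ ?_
    · intro n
      rcases Nat.eq_zero_or_pos n with rfl | hn
      · simp [h30]
      · rw [if_pos ⟨rfl, rfl, (by exact_mod_cast hn : (1:ℤ) ≤ (n:ℤ))⟩]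
        simp
    · rintro ⟨x, y, z⟩ hp
      rw [if_neg]
      rintro ⟨rfl, rfl, hz⟩
      exact hp ⟨z.toNat, by have hz' : (1:ℤ) ≤ z := hz; simp [Int.toNat_of_nonneg (show (0:ℤ) ≤ z by omega)]⟩
  refine ((((H0.add H1).add H2).add H3).congr_fun fun p => ?_).summable
  rcases p with ⟨x, y, z⟩
  by_cases h0 : x = 0 ∧ y = 0 ∧ z = 0
  · obtain ⟨rfl, rfl, rfl⟩ := h0
    simp [axisFilter3']
  · have hδ : ¬(((x, y, z) : ℤ × ℤ × ℤ) = ((0 : ℤ), (0 : ℤ), (0 : ℤ))) := by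
      simpa [Prod.mk.injEq] using h0
    simp only [axisFilter3']
    rw [if_neg h0, if_neg hδ]
    split_ifs <;> first | (exfalso; omega) | simp

lemma hasSum_plane3' (a₁ a₂ a₃ : ℕ → ℝ)
    (h10 : a₁ 0 = 0) (h20 : a₂ 0 = 0)
    (h1 : Summable fun i => |a₁ i|) (h2 : Summable fun i => |a₂ i|)
    (k : ℤ) :
    HasSum (fun q : ℤ × ℤ => axisFilter3' a₁ a₂ a₃ (q.1, q.2, k))
      (planeSum3' a₁ a₂ a₃ k) := by
  rcases eq_or_ne k 0 with rfl | hk0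
  · have H0 : HasSum (fun q : ℤ × ℤ => if q = ((0 : ℤ), (0 : ℤ)) then
        -((∑' i : ℕ, a₁ i) + (∑' i : ℕ, a₂ i) + (∑' i : ℕ, a₃ i)) else 0)
        (-((∑' i : ℕ, a₁ i) + (∑' i : ℕ, a₂ i) + (∑' i : ℕ, a₃ i))) := hasSum_ite_eq _ _
    have H1 : HasSum (fun q : ℤ × ℤ => if 1 ≤ q.1 ∧ q.2 = 0 then a₁ q.1.toNat else 0)
        (∑' i : ℕ, a₁ i) := by
      refine hasSum_of_inj _ h1.of_abs
        (fun n : ℕ => (((n : ℤ), 0) : ℤ × ℤ)) (fun m n h => by simpa using h) _ ?_ ?_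
      · intro n
        rcases Nat.eq_zero_or_pos n with rfl | hn
        · simp [h10]
        · rw [if_pos ⟨(by exact_mod_cast hn : (1:ℤ) ≤ (n:ℤ)), rfl⟩]
          simp
      · rintro ⟨x, y⟩ hp
        rw [if_neg]
        rintro ⟨hx, rfl⟩
        exact hp ⟨x.toNat, by have hx' : (1:ℤ) ≤ x := hx; simp [Int.toNat_of_nonneg (show (0:ℤ) ≤ x by omega)]⟩
    have H2 : HasSum (fun q : ℤ × ℤ => if q.1 = 0 ∧ 1 ≤ q.2 then a₂ q.2.toNat else 0)
        (∑' i : ℕ, a₂ i) := by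
      refine hasSum_of_inj _ h2.of_abs
        (fun n : ℕ => ((0, (n : ℤ)) : ℤ × ℤ)) (fun m n h => by simpa using h) _ ?_ ?_
      · intro n
        rcases Nat.eq_zero_or_pos n with rfl | hn
        · simp [h20]
        · rw [if_pos ⟨rfl, (by exact_mod_cast hn : (1:ℤ) ≤ (n:ℤ))⟩]
          simp
      · rintro ⟨x, y⟩ hp
        rw [if_neg]
        rintro ⟨rfl, hy⟩
        exact hp ⟨y.toNat, by have hy' : (1:ℤ) ≤ y := hy; simp [Int.toNat_of_nonneg (show (0:ℤ) ≤ y by omega)]⟩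
    have htot := (H0.add H1).add H2
    have hval : planeSum3' a₁ a₂ a₃ 0 =
        -((∑' i : ℕ, a₁ i) + (∑' i : ℕ, a₂ i) + (∑' i : ℕ, a₃ i))
          + (∑' i : ℕ, a₁ i) + (∑' i : ℕ, a₂ i) := by
      simp [planeSum3']
    rw [hval]
    refine htot.congr_fun fun q => ?_
    rcases q with ⟨x, y⟩
    by_cases h0 : x = 0 ∧ y = 0
    · obtain ⟨rfl, rfl⟩ := h0
      simp [axisFilter3']
    · have hδ : ¬(((x, y) : ℤ × ℤ) = ((0 : ℤ), (0 : ℤ))) := by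
        simpa [Prod.mk.injEq] using h0
      simp only [axisFilter3', and_true]
      rw [if_neg h0, if_neg hδ]
      split_ifs <;> first | ring1 | (exfalso; omega)
  · rcases lt_or_ge k 0 with hk | hk
    · have hval : planeSum3' a₁ a₂ a₃ k = 0 := by
        rw [planeSum3', if_neg hk0, if_neg (by omega)]
      rw [hval]
      refine hasSum_zero.congr_fun fun q => ?_
      rcases q with ⟨x, y⟩
      simp only [axisFilter3']
      split_ifs <;> first | rfl | (exfalso; omega)
    · have hk1 : 1 ≤ k := by omega
      have hval : planeSum3' a₁ a₂ a₃ k = a₃ k.toNat := by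
        rw [planeSum3', if_neg hk0, if_pos hk1]
      rw [hval]
      refine (hasSum_ite_eq ((0 : ℤ), (0 : ℤ)) (a₃ k.toNat)).congr_fun fun q => ?_
      rcases q with ⟨x, y⟩
      simp only [axisFilter3', Prod.mk.injEq]
      split_ifs <;> first | rfl | (exfalso; omega)

theorem stmt_17 (a₁ a₂ a₃ : ℕ → ℝ)
    (h10 : a₁ 0 = 0) (h20 : a₂ 0 = 0) (h30 : a₃ 0 = 0)
    (h1 : Summable fun i => |a₁ i|) (h2 : Summable fun i => |a₂ i|)
    (h3 : Summable fun i => |a₃ i|)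
    (hnz : ∃ i, a₃ i ≠ 0) :
    (∑' q : ℤ × ℤ, rho3' a₁ a₂ a₃ (q.1, q.2, 0)) =
        (∑' i : ℕ, a₃ i) ^ 2 + (∑' i : ℕ, (a₃ i) ^ 2) ∧
      (0 < ∑' q : ℤ × ℤ, rho3' a₁ a₂ a₃ (q.1, q.2, 0)) ∧
      (∑' n : ℤ × ℤ × ℤ, rho3' a₁ a₂ a₃ n) = 0 := by
  obtain ⟨c, hc⟩ : ∃ c, c = axisFilter3' a₁ a₂ a₃ := ⟨_, rfl⟩
  obtain ⟨G, hG⟩ : ∃ G, G = planeSum3' a₁ a₂ a₃ := ⟨_, rfl⟩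
  have habs : Summable fun p => |c p| := by
    rw [hc]; exact keyAbs3' a₁ a₂ a₃ h10 h20 h30 h1 h2 h3
  -- the filter sums to zero
  have hc0 : HasSum c 0 := by
    rw [hc]
    have h := key3' a₁ a₂ a₃ h10 h20 h30 h1 h2 h3 (fun _ => (1 : ℝ)) 1 (fun p => by simp)
    simp only [mul_one] at h
    convert h using 1
    ring
  -- bound on G
  have hGb : ∀ k, |G k| ≤
      |(-((∑' i : ℕ, a₁ i) + (∑' i : ℕ, a₂ i) + (∑' i : ℕ, a₃ i))
        + (∑' i : ℕ, a₁ i) + (∑' i : ℕ, a₂ i))| + (∑' i : ℕ, |a₃ i|) := by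
    intro k
    have htn : (0 : ℝ) ≤ ∑' i : ℕ, |a₃ i| := tsum_nonneg fun i => abs_nonneg _
    rcases eq_or_ne k 0 with rfl | hk0
    · rw [hG, planeSum3', if_pos rfl]
      exact le_add_of_nonneg_right htn
    · rcases le_or_gt 1 k with hk1 | hk1
      · rw [hG, planeSum3', if_neg hk0, if_pos hk1]
        have : |a₃ k.toNat| ≤ ∑' i : ℕ, |a₃ i| :=
          Summable.le_tsum h3 k.toNat fun j _ => abs_nonneg _
        exact le_add_of_nonneg_of_le (abs_nonneg _) this
      · rw [hG, planeSum3', if_neg hk0, if_neg (by omega)]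
        simpa using add_nonneg (abs_nonneg _) htn
  -- part 1: the plane sum
  have hplane : (∑' q : ℤ × ℤ, rho3' a₁ a₂ a₃ (q.1, q.2, 0)) =
      (∑' i : ℕ, a₃ i) ^ 2 + (∑' i : ℕ, (a₃ i) ^ 2) := by
    -- joint summability
    have hprod : Summable (fun y : (ℤ × ℤ × ℤ) × (ℤ × ℤ × ℤ) => |c y.1| * |c y.2|) :=
      habs.mul_of_nonneg habs (fun _ => abs_nonneg _) (fun _ => abs_nonneg _)
    have hι : Function.Injective (fun x : (ℤ × ℤ) × (ℤ × ℤ × ℤ) =>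
        ((x.2, (x.2.1 + x.1.1, x.2.2.1 + x.1.2, x.2.2.2)) :
          (ℤ × ℤ × ℤ) × (ℤ × ℤ × ℤ))) := by
      rintro ⟨⟨q1, q2⟩, ⟨p1, p2, p3⟩⟩ ⟨⟨r1, r2⟩, ⟨s1, s2, s3⟩⟩ h
      simp only [Prod.mk.injEq] at h ⊢
      omega
    have habsΦ : Summable ((fun y : (ℤ × ℤ × ℤ) × (ℤ × ℤ × ℤ) => |c y.1| * |c y.2|) ∘
        (fun x : (ℤ × ℤ) × (ℤ × ℤ × ℤ) =>
          (x.2, (x.2.1 + x.1.1, x.2.2.1 + x.1.2, x.2.2.2)))) :=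
      hprod.comp_injective hι
    have hΦ : Summable (fun x : (ℤ × ℤ) × (ℤ × ℤ × ℤ) =>
        c x.2 * c (x.2.1 + x.1.1, x.2.2.1 + x.1.2, x.2.2.2)) := by
      apply Summable.of_abs
      exact habsΦ.congr fun x => (abs_mul _ _).symm
    have hswap : (∑' q : ℤ × ℤ, ∑' p : ℤ × ℤ × ℤ,
          c p * c (p.1 + q.1, p.2.1 + q.2, p.2.2)) =
        ∑' p : ℤ × ℤ × ℤ, ∑' q : ℤ × ℤ,
          c p * c (p.1 + q.1, p.2.1 + q.2, p.2.2) := by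
      exact Summable.tsum_comm' hΦ.prod_symm (fun p => hΦ.prod_symm.prod_factor p) (fun q => hΦ.prod_factor q)
    have hinner : ∀ p : ℤ × ℤ × ℤ,
        (∑' q : ℤ × ℤ, c p * c (p.1 + q.1, p.2.1 + q.2, p.2.2)) = c p * G p.2.2 := by
      intro p
      rw [tsum_mul_left]
      congr 1
      rw [hc, hG]
      have h1' := (Equiv.addLeft ((p.1, p.2.1) : ℤ × ℤ)).tsum_eq
        (fun q : ℤ × ℤ => axisFilter3' a₁ a₂ a₃ (q.1, q.2, p.2.2))
      have h2' := (hasSum_plane3' a₁ a₂ a₃ h10 h20 h1 h2 p.2.2).tsum_eq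
      rw [← h2', ← h1']
      rfl
    have hmain := (key3' a₁ a₂ a₃ h10 h20 h30 h1 h2 h3 (fun p => G p.2.2) _ (fun p => hGb p.2.2)).tsum_eq
    rw [← hc] at hmain
    calc (∑' q : ℤ × ℤ, rho3' a₁ a₂ a₃ (q.1, q.2, 0))
        = ∑' q : ℤ × ℤ, ∑' p : ℤ × ℤ × ℤ,
            c p * c (p.1 + q.1, p.2.1 + q.2, p.2.2) := by
          simp only [rho3', add_zero, ← hc]
      _ = ∑' p : ℤ × ℤ × ℤ, ∑' q : ℤ × ℤ,
            c p * c (p.1 + q.1, p.2.1 + q.2, p.2.2) := hswap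
      _ = ∑' p : ℤ × ℤ × ℤ, c p * G p.2.2 := tsum_congr hinner
      _ = -((∑' i : ℕ, a₁ i) + (∑' i : ℕ, a₂ i) + (∑' i : ℕ, a₃ i)) * G 0
            + (∑' i : ℕ, a₁ i * G 0) + (∑' i : ℕ, a₂ i * G 0)
            + (∑' i : ℕ, a₃ i * G (i : ℤ)) := hmain
      _ = (∑' i : ℕ, a₃ i) ^ 2 + (∑' i : ℕ, (a₃ i) ^ 2) := by
          have hG0 : G 0 = -((∑' i : ℕ, a₁ i) + (∑' i : ℕ, a₂ i) + (∑' i : ℕ, a₃ i))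
              + (∑' i : ℕ, a₁ i) + (∑' i : ℕ, a₂ i) := by
            rw [hG, planeSum3', if_pos rfl]
          have hGsq : (∑' i : ℕ, a₃ i * G (i : ℤ)) = ∑' i : ℕ, (a₃ i) ^ 2 := by
            refine tsum_congr fun i => ?_
            rcases Nat.eq_zero_or_pos i with rfl | hi
            · simp [h30]
            · rw [hG, planeSum3', if_neg (by exact_mod_cast hi.ne'),
                if_pos (by exact_mod_cast hi)]
              simp [sq]
          rw [hGsq, tsum_mul_right, tsum_mul_right, hG0]
          ring
  refine ⟨hplane, ?_, ?_⟩
  · -- positivity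
    rw [hplane]
    have hsq : Summable fun i => (a₃ i) ^ 2 := by
      refine Summable.of_nonneg_of_le (fun i => sq_nonneg _) (fun i => ?_)
        (h3.mul_left (∑' i : ℕ, |a₃ i|))
      have hb : |a₃ i| ≤ ∑' j : ℕ, |a₃ j| := Summable.le_tsum h3 i fun j _ => abs_nonneg _
      calc (a₃ i) ^ 2 = |a₃ i| * |a₃ i| := by rw [← abs_mul, sq, abs_mul_self]
        _ ≤ (∑' j : ℕ, |a₃ j|) * |a₃ i| := mul_le_mul_of_nonneg_right hb (abs_nonneg _)
    obtain ⟨i, hi⟩ := hnz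
    have hpos : 0 < ∑' i : ℕ, (a₃ i) ^ 2 :=
      Summable.tsum_pos hsq (fun j => sq_nonneg _) i (by positivity)
    have := sq_nonneg (∑' i : ℕ, a₃ i)
    linarith
  · -- total sum is zero
    have hprod : Summable (fun y : (ℤ × ℤ × ℤ) × (ℤ × ℤ × ℤ) => |c y.1| * |c y.2|) :=
      habs.mul_of_nonneg habs (fun _ => abs_nonneg _) (fun _ => abs_nonneg _)
    have hι : Function.Injective (fun x : (ℤ × ℤ × ℤ) × (ℤ × ℤ × ℤ) =>
        ((x.2, (x.2.1 + x.1.1, x.2.2.1 + x.1.2.1, x.2.2.2 + x.1.2.2)) :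
          (ℤ × ℤ × ℤ) × (ℤ × ℤ × ℤ))) := by
      rintro ⟨⟨q1, q2, q3⟩, ⟨p1, p2, p3⟩⟩ ⟨⟨r1, r2, r3⟩, ⟨s1, s2, s3⟩⟩ h
      simp only [Prod.mk.injEq] at h ⊢
      omega
    have habsΨ : Summable ((fun y : (ℤ × ℤ × ℤ) × (ℤ × ℤ × ℤ) => |c y.1| * |c y.2|) ∘
        (fun x : (ℤ × ℤ × ℤ) × (ℤ × ℤ × ℤ) =>
          (x.2, (x.2.1 + x.1.1, x.2.2.1 + x.1.2.1, x.2.2.2 + x.1.2.2)))) :=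
      hprod.comp_injective hι
    have hΨ : Summable (fun x : (ℤ × ℤ × ℤ) × (ℤ × ℤ × ℤ) =>
        c x.2 * c (x.2.1 + x.1.1, x.2.2.1 + x.1.2.1, x.2.2.2 + x.1.2.2)) := by
      apply Summable.of_abs
      exact habsΨ.congr fun x => (abs_mul _ _).symm
    have hswap : (∑' n : ℤ × ℤ × ℤ, ∑' p : ℤ × ℤ × ℤ,
          c p * c (p.1 + n.1, p.2.1 + n.2.1, p.2.2 + n.2.2)) =
        ∑' p : ℤ × ℤ × ℤ, ∑' n : ℤ × ℤ × ℤ,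
          c p * c (p.1 + n.1, p.2.1 + n.2.1, p.2.2 + n.2.2) :=
      Summable.tsum_comm' hΨ.prod_symm (fun p => hΨ.prod_symm.prod_factor p) (fun n => hΨ.prod_factor n)
    have hinner : ∀ p : ℤ × ℤ × ℤ,
        (∑' n : ℤ × ℤ × ℤ, c p * c (p.1 + n.1, p.2.1 + n.2.1, p.2.2 + n.2.2)) = 0 := by
      intro p
      rw [tsum_mul_left]
      have h1' := (Equiv.addLeft p).tsum_eq c
      have h2' : (∑' n : ℤ × ℤ × ℤ, c (p + n)) = 0 := by
        rw [show (fun n : ℤ × ℤ × ℤ => c (p + n)) = fun n => c ((Equiv.addLeft p) n) from rfl,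
          h1', hc0.tsum_eq]
      have h3' : (∑' n : ℤ × ℤ × ℤ, c (p.1 + n.1, p.2.1 + n.2.1, p.2.2 + n.2.2)) =
          ∑' n : ℤ × ℤ × ℤ, c (p + n) := rfl
      rw [h3', h2', mul_zero]
    calc (∑' n : ℤ × ℤ × ℤ, rho3' a₁ a₂ a₃ n)
        = ∑' n : ℤ × ℤ × ℤ, ∑' p : ℤ × ℤ × ℤ,
            c p * c (p.1 + n.1, p.2.1 + n.2.1, p.2.2 + n.2.2) := by
          simp only [rho3', ← hc]
      _ = ∑' p : ℤ × ℤ × ℤ, ∑' n : ℤ × ℤ × ℤ,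
            c p * c (p.1 + n.1, p.2.1 + n.2.1, p.2.2 + n.2.2) := hswap
      _ = ∑' p : ℤ × ℤ × ℤ, (0 : ℝ) := tsum_congr hinner
      _ = 0 := tsum_zero
end
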